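/- arXiv:0909.3509 — 2 statements merged into one kernel-verified Lean document; each statement's English description precedes it below -/
import Mathlib

section
/- Let α, β, γ, t be integers with 1 ≤ α ≤ β ≤ γ < 2(α+β), with α+β+γ divisible by 3, and with t > (α+β+γ)/3. Set σ = α+β+γ, s = (2/3)σ + t − 2, and e = σ + 2t − 3, and for d ∈ ℕ let h(d) be the number of triples (a,b,c) ∈ ℕ³ with a+b+c = d, a < α+t, b < β+t, c < γ+t, and not (a ≥ α and b ≥ β and c ≥ γ). Then for every integer d with s+1 ≤ d ≤ e one has h(d) = 3·C(σ+2t−1−d,2) − 3·C(σ+t−1−d,2) − C(β+γ+2t−1−d,2) − C(α+γ+2t−1−d,2) − C(α+β+2t−1−d,2), where C(m,2) = binom(m,2) with the convention C(m,2) = 0 for m < 2. -/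
/-- The Hilbert function of `R/I` where
`I = (x^{α+t}, y^{β+t}, z^{γ+t}, x^α y^β z^γ) ⊂ K[x,y,z]`:
`hilb α β γ t d` is the number of triples `(a,b,c) ∈ ℕ³` with `a+b+c = d`,
`a < α+t`, `b < β+t`, `c < γ+t`, and not (`a ≥ α` and `b ≥ β` and `c ≥ γ`). -/
def hilb (α β γ t d : ℕ) : ℕ :=
  ((Finset.range (α + t) ×ˢ Finset.range (β + t) ×ˢ Finset.range (γ + t)).filter
    (fun p => p.1 + p.2.1 + p.2.2 = d ∧ ¬(α ≤ p.1 ∧ β ≤ p.2.1 ∧ γ ≤ p.2.2))).card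

/-- `C2 m = binom(m, 2)` for an integer `m`, with the convention that it is
`0` whenever `m < 2`. -/
def C2 (m : ℤ) : ℤ := if 0 ≤ m then (m.toNat.choose 2 : ℤ) else 0

open Finset

lemma C2_eq_zero {m : ℤ} (h : m ≤ 1) : C2 m = 0 := by
  unfold C2
  split_ifs with h0
  · have : m.toNat < 2 := by omega
    simp [Nat.choose_eq_zero_of_lt this]
  · rfl

lemma two_C2 {m : ℤ} (h : 0 ≤ m) : 2 * C2 m = m * (m - 1) := by
  unfold C2
  rw [if_pos h]
  obtain ⟨n, rfl⟩ := Int.eq_ofNat_of_zero_le h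
  rw [Int.toNat_natCast, Nat.choose_two_right]
  cases n with
  | zero => simp
  | succ k =>
    have h2 : 2 ∣ (k + 1) * ((k + 1) - 1) := by
      simpa [Nat.mul_comm] using (Nat.even_mul_succ_self k).two_dvd
    calc 2 * (((k + 1) * ((k + 1) - 1) / 2 : ℕ) : ℤ)
        = (((k + 1) * ((k + 1) - 1) / 2 * 2 : ℕ) : ℤ) := by push_cast; ring
      _ = (((k + 1) * ((k + 1) - 1) : ℕ) : ℤ) := by rw [Nat.div_mul_cancel h2]
      _ = ((k + 1 : ℕ) : ℤ) * (((k + 1 : ℕ) : ℤ) - 1) := by push_cast; ring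

lemma c_refl (m : ℤ) : 2 * C2 m + 2 * C2 (1 - m) = m * (m - 1) := by
  rcases le_or_gt m 0 with h | h
  · rw [C2_eq_zero (by omega : m ≤ 1), two_C2 (by omega : (0:ℤ) ≤ 1 - m)]; ring
  · rw [C2_eq_zero (by omega : (1:ℤ) - m ≤ 1), two_C2 (by omega : (0:ℤ) ≤ m)]; ring

def ip (x : ℤ) : ℤ := if 0 ≤ x then x else 0

lemma ip_of_nonpos {x : ℤ} (h : x ≤ 0) : ip x = 0 := by
  unfold ip; split_ifs <;> omega

lemma C2_add_one (x : ℤ) : C2 (x + 1) = C2 x + ip x := by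
  rcases le_or_gt x 0 with h | h
  · rw [C2_eq_zero (by omega : x + 1 ≤ 1), C2_eq_zero (by omega : x ≤ 1), ip_of_nonpos h]; ring
  · have e1 := two_C2 (by omega : (0:ℤ) ≤ x + 1)
    have e2 := two_C2 (by omega : (0:ℤ) ≤ x)
    have hip : ip x = x := by unfold ip; rw [if_pos (by omega)]
    rw [hip]
    nlinarith [e1, e2]

def cnt2 (B C m : ℕ) : ℕ :=
  ((range B ×ˢ range C).filter fun p => p.1 + p.2 = m).card

def cnt3 (A B C d : ℕ) : ℕ :=
  ((range A ×ˢ range B ×ˢ range C).filter fun p => p.1 + p.2.1 + p.2.2 = d).card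

lemma cnt2_formula (B C m : ℕ) :
    (cnt2 B C m : ℤ)
      = ip ((m:ℤ) + 1) - ip ((m:ℤ) + 1 - B) - ip ((m:ℤ) + 1 - C)
        + ip ((m:ℤ) + 1 - B - C) := by
  induction B with
  | zero => simp [cnt2]
  | succ B ih =>
    have inner : (∑ y ∈ range C, if (B, y).1 + (B, y).2 = m then 1 else 0)
        = (if B ≤ m ∧ m - B < C then 1 else 0) := by
      show (∑ y ∈ range C, if B + y = m then 1 else 0) = _
      rcases le_or_gt B m with h | h
      · have hc : ∀ y ∈ range C, (if B + y = m then (1:ℕ) else 0)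
            = if y = m - B then 1 else 0 := by
          intro y _; exact if_congr (by omega) rfl rfl
        rw [Finset.sum_congr rfl hc,
          Finset.sum_ite_eq' (range C) (m - B) (fun _ => 1)]
        simp only [mem_range]
        split_ifs <;> omega
      · rw [Finset.sum_eq_zero, if_neg (by omega)]
        intro y _; exact if_neg (by omega)
    have hsplit : cnt2 (B + 1) C m
        = cnt2 B C m + (if B ≤ m ∧ m - B < C then 1 else 0) := by
      unfold cnt2
      rw [card_filter, card_filter, Finset.sum_product, range_add_one,
        Finset.sum_insert (by simp), Finset.sum_product, inner]
      omega
    rw [hsplit]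
    push_cast
    rw [ih]
    have e1 : ((m:ℤ) + 1 - ((B:ℤ) + 1)) = ((m:ℤ) - B) := by ring
    rw [e1]
    have h1 : ip ((m:ℤ) + 1 - B) = ip ((m:ℤ) - B) + (if B ≤ m then 1 else 0) := by
      unfold ip; split_ifs <;> omega
    have h2 : ip ((m:ℤ) + 1 - B - C) = ip ((m:ℤ) - B - C) + (if B + C ≤ m then 1 else 0) := by
      unfold ip; split_ifs <;> omega
    rw [h1, h2]
    split_ifs <;> omega

lemma cnt3_succ (A B C d : ℕ) :
    cnt3 (A + 1) B C d = cnt3 A B C d + (if A ≤ d then cnt2 B C (d - A) else 0) := by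
  have inner : (∑ x ∈ range B, ∑ y ∈ range C,
        if (A, x, y).1 + (A, x, y).2.1 + (A, x, y).2.2 = d then 1 else 0)
      = (if A ≤ d then cnt2 B C (d - A) else 0) := by
    show (∑ x ∈ range B, ∑ y ∈ range C, if A + x + y = d then 1 else 0) = _
    split_ifs with h
    · calc (∑ x ∈ range B, ∑ y ∈ range C, if A + x + y = d then 1 else 0)
          = ∑ x ∈ range B, ∑ y ∈ range C, if x + y = d - A then 1 else 0 :=
            Finset.sum_congr rfl fun x _ => Finset.sum_congr rfl fun y _ =>
              if_congr (by omega) rfl rfl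
        _ = cnt2 B C (d - A) := by rw [cnt2, card_filter, Finset.sum_product]
    · apply Finset.sum_eq_zero; intro x _
      apply Finset.sum_eq_zero; intro y _
      exact if_neg (by omega)
  unfold cnt3
  rw [card_filter, card_filter, range_add_one, Finset.sum_product,
    Finset.sum_insert (by simp), Finset.sum_product, Finset.sum_product, inner]
  omega

lemma cnt3_formula (A B C d : ℕ) :
    (cnt3 A B C d : ℤ)
      = C2 ((d:ℤ) + 2) - C2 ((d:ℤ) + 2 - A) - C2 ((d:ℤ) + 2 - B) - C2 ((d:ℤ) + 2 - C)
        + C2 ((d:ℤ) + 2 - A - B) + C2 ((d:ℤ) + 2 - A - C) + C2 ((d:ℤ) + 2 - B - C)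
        - C2 ((d:ℤ) + 2 - A - B - C) := by
  induction A with
  | zero => simp [cnt3]; ring
  | succ A ih =>
    rw [cnt3_succ]
    push_cast
    rw [ih]
    have k : ∀ r : ℤ, C2 ((d:ℤ) + 2 - A - r) = C2 ((d:ℤ) + 2 - (A + 1) - r) + ip ((d:ℤ) + 1 - A - r) := by
      intro r
      have h := C2_add_one ((d:ℤ) + 1 - A - r)
      rw [show (d:ℤ) + 1 - A - r + 1 = (d:ℤ) + 2 - A - r by ring] at h
      rw [h]; ring_nf
    have kA := k 0
    have kB := k B
    have kC := k C
    have kBC := k ((B : ℤ) + C)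
    rcases le_or_gt A d with h | h
    · rw [if_pos h, cnt2_formula]
      have hc : ((d - A : ℕ) : ℤ) = (d : ℤ) - A := by omega
      rw [hc]
      have iA : ip ((d:ℤ) - A + 1) = ip ((d:ℤ) + 1 - A - 0) := by ring_nf
      have iB : ip ((d:ℤ) - A + 1 - B) = ip ((d:ℤ) + 1 - A - B) := by ring_nf
      have iC : ip ((d:ℤ) - A + 1 - C) = ip ((d:ℤ) + 1 - A - C) := by ring_nf
      have iBC : ip ((d:ℤ) - A + 1 - B - C) = ip ((d:ℤ) + 1 - A - (B + C)) := by ring_nf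
      linear_combination (norm := ring_nf) -kA + kB + kC - kBC + iA - iB - iC + iBC
    · rw [if_neg (not_le.mpr h)]
      have hz : ∀ r : ℤ, 0 ≤ r → ip ((d:ℤ) + 1 - A - r) = 0 := fun r hr =>
        ip_of_nonpos (by omega)
      rw [hz 0 le_rfl] at kA
      rw [hz B (by positivity)] at kB
      rw [hz C (by positivity)] at kC
      rw [hz _ (by positivity)] at kBC
      linear_combination (norm := ring_nf) -kA + kB + kC - kBC

lemma corner_card (α β γ t d : ℕ) (hd : α + β + γ ≤ d) :
    ((range (α + t) ×ˢ range (β + t) ×ˢ range (γ + t)).filter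
      (fun p => p.1 + p.2.1 + p.2.2 = d ∧ (α ≤ p.1 ∧ β ≤ p.2.1 ∧ γ ≤ p.2.2))).card
      = cnt3 t t t (d - (α + β + γ)) := by
  unfold cnt3
  apply Finset.card_bij' (fun p _ => (p.1 - α, p.2.1 - β, p.2.2 - γ))
    (fun q _ => (q.1 + α, q.2.1 + β, q.2.2 + γ))
  · intro a ha
    simp only [mem_filter, mem_product, mem_range] at ha ⊢
    omega
  · intro a ha
    simp only [mem_filter, mem_product, mem_range] at ha ⊢
    omega
  · intro a ha
    simp only [mem_filter, mem_product, mem_range] at ha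
    simp only [Prod.ext_iff]
    refine ⟨by omega, by omega, by omega⟩
  · intro a ha
    simp only [mem_filter, mem_product, mem_range] at ha
    simp only [Prod.ext_iff]
    refine ⟨by omega, by omega, by omega⟩

lemma hilb_split (α β γ t d : ℕ) (hd : α + β + γ ≤ d) :
    hilb α β γ t d + cnt3 t t t (d - (α + β + γ)) = cnt3 (α + t) (β + t) (γ + t) d := by
  classical
  have hq := Finset.card_filter_add_card_filter_not
    (s := (range (α + t) ×ˢ range (β + t) ×ˢ range (γ + t)).filter
      fun p => p.1 + p.2.1 + p.2.2 = d)
    (p := fun p => α ≤ p.1 ∧ β ≤ p.2.1 ∧ γ ≤ p.2.2)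
  rw [Finset.filter_filter, Finset.filter_filter] at hq
  have e1 : hilb α β γ t d
      = ((range (α + t) ×ˢ range (β + t) ×ˢ range (γ + t)).filter
        (fun p => p.1 + p.2.1 + p.2.2 = d ∧ ¬(α ≤ p.1 ∧ β ≤ p.2.1 ∧ γ ≤ p.2.2))).card := by
    unfold hilb; congr 1
  rw [e1, ← corner_card α β γ t d hd]
  unfold cnt3
  omega

/-- In degrees `s+1 ≤ d ≤ e`, where `s = (2/3)σ + t - 2` (encoded by
`3(s+2) = 2σ + 3t`) and `e = σ + 2t - 3` (encoded by `e + 3 = σ + 2t`), the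
Hilbert function is given by the dual formula coming from the tail of the free
resolution. -/
theorem hilb_formula_high_degrees (α β γ t σ s e : ℕ)
    (hα : 1 ≤ α) (hαβ : α ≤ β) (hβγ : β ≤ γ) (hγ : γ < 2 * (α + β))
    (hσ : σ = α + β + γ) (h3 : 3 ∣ σ) (ht : σ < 3 * t)
    (hs : 3 * (s + 2) = 2 * σ + 3 * t) (he : e + 3 = σ + 2 * t) :
    ∀ d : ℕ, s + 1 ≤ d → d ≤ e →
      (hilb α β γ t d : ℤ)
        = 3 * C2 ((σ : ℤ) + 2 * t - 1 - d) - 3 * C2 ((σ : ℤ) + t - 1 - d)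
          - C2 ((β : ℤ) + γ + 2 * t - 1 - d)
          - C2 ((α : ℤ) + γ + 2 * t - 1 - d)
          - C2 ((α : ℤ) + β + 2 * t - 1 - d) := by
  subst hσ
  intro d hd1 hd2
  obtain ⟨k, hk⟩ := h3
  have hσd : α + β + γ ≤ d := by omega
  have hsplit := hilb_split α β γ t d hσd
  have key : (hilb α β γ t d : ℤ)
      = (cnt3 (α + t) (β + t) (γ + t) d : ℤ) - (cnt3 t t t (d - (α + β + γ)) : ℤ) := by
    omega
  have hc : ((d - (α + β + γ) : ℕ) : ℤ) = (d : ℤ) - α - β - γ := by omega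
  -- reflection identities
  have r0 := c_refl ((d:ℤ) + 2)
  have rA := c_refl ((d:ℤ) + 2 - α - t)
  have rB := c_refl ((d:ℤ) + 2 - β - t)
  have rG := c_refl ((d:ℤ) + 2 - γ - t)
  have rAB := c_refl ((d:ℤ) + 2 - α - β - 2*t)
  have rAG := c_refl ((d:ℤ) + 2 - α - γ - 2*t)
  have rBG := c_refl ((d:ℤ) + 2 - β - γ - 2*t)
  have rS := c_refl ((d:ℤ) + 2 - α - β - γ)
  have rSt := c_refl ((d:ℤ) + 2 - α - β - γ - t)
  have rS2t := c_refl ((d:ℤ) + 2 - α - β - γ - 2*t)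
  -- vanishing of small C2 values
  have z0 : C2 (1 - ((d:ℤ) + 2)) = 0 := C2_eq_zero (by omega)
  have zA : C2 ((α:ℤ) + t - 1 - d) = 0 := C2_eq_zero (by omega)
  have zB : C2 ((β:ℤ) + t - 1 - d) = 0 := C2_eq_zero (by omega)
  have zG : C2 ((γ:ℤ) + t - 1 - d) = 0 := C2_eq_zero (by omega)
  have zS : C2 ((α:ℤ) + β + γ - 1 - d) = 0 := C2_eq_zero (by omega)
  have h2 : 2 * (hilb α β γ t d : ℤ)
      = 2 * (3 * C2 (((α + β + γ : ℕ) : ℤ) + 2 * t - 1 - d)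
          - 3 * C2 (((α + β + γ : ℕ) : ℤ) + t - 1 - d)
          - C2 ((β : ℤ) + γ + 2 * t - 1 - d)
          - C2 ((α : ℤ) + γ + 2 * t - 1 - d)
          - C2 ((α : ℤ) + β + 2 * t - 1 - d)) := by
    rw [key, cnt3_formula, cnt3_formula, hc]
    push_cast
    linear_combination (norm := ring_nf)
      r0 - rA - rB - rG + rAB + rAG + rBG - rS + 3*rSt - 3*rS2t
      - 2*z0 + 2*zA + 2*zB + 2*zG + 2*zS
  omega
end

section
/- Let α, β, γ, t be integers with 1 ≤ α ≤ β ≤ γ < 2(α+β), with α+β+γ divisible by 3, and with t > (α+β+γ)/3. Set σ = α+β+γ and s = (2/3)σ + t − 2, and for d ∈ ℕ let h(d) be the number of triples (a,b,c) ∈ ℕ³ with a+b+c = d, a < α+t, b < β+t, c < γ+t, and not (a ≥ α and b ≥ β and c ≥ γ). Then h(s) = h(s+1). -/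
set_option maxHeartbeats 1000000


namespace HilbPeaksAux

open Finset

/-- All triples of naturals summing to `d`. -/
def Tri (d : ℕ) : Finset (ℕ × ℕ × ℕ) :=
  (Finset.range (d+1) ×ˢ Finset.range (d+1) ×ˢ Finset.range (d+1)).filter
    (fun p => p.1 + p.2.1 + p.2.2 = d)

lemma mem_Tri {d : ℕ} {p : ℕ × ℕ × ℕ} : p ∈ Tri d ↔ p.1 + p.2.1 + p.2.2 = d := by
  simp only [Tri, mem_filter, mem_product, mem_range]
  omega

/-- Shifting down all three coordinates. -/
lemma card_shift (a b c d : ℕ) (h : a + b + c ≤ d) :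
    ((Tri d).filter fun p => a ≤ p.1 ∧ b ≤ p.2.1 ∧ c ≤ p.2.2).card
      = (Tri (d - (a+b+c))).card := by
  apply Finset.card_bij (fun p _ => (p.1 - a, p.2.1 - b, p.2.2 - c))
  · intro p hp
    simp only [mem_filter, mem_Tri] at hp ⊢
    omega
  · rintro ⟨p1, p2, p3⟩ hp ⟨q1, q2, q3⟩ hq hpq
    simp only [mem_filter, mem_Tri] at hp hq
    simp only [Prod.mk.injEq] at hpq ⊢
    omega
  · rintro ⟨q1, q2, q3⟩ hq
    have hq' : q1 + q2 + q3 = d - (a + b + c) := by simpa using mem_Tri.mp hq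
    refine ⟨(q1 + a, q2 + b, q3 + c), ?_, ?_⟩
    · simp only [mem_filter, mem_Tri]
      omega
    · simp only [Prod.mk.injEq]
      omega

lemma card_shift1 (n d : ℕ) (h : n ≤ d) :
    ((Tri d).filter fun p => n ≤ p.1).card = (Tri (d - n)).card := by
  have h0 : ((Tri d).filter fun p => n ≤ p.1)
      = ((Tri d).filter fun p => n ≤ p.1 ∧ 0 ≤ p.2.1 ∧ 0 ≤ p.2.2) := by
    apply filter_congr; intro p _; simp
  rw [h0, card_shift n 0 0 d (by omega)]
  have : d - (n + 0 + 0) = d - n := by omega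
  rw [this]

lemma card_shift2 (n d : ℕ) (h : n ≤ d) :
    ((Tri d).filter fun p => n ≤ p.2.1).card = (Tri (d - n)).card := by
  have h0 : ((Tri d).filter fun p => n ≤ p.2.1)
      = ((Tri d).filter fun p => 0 ≤ p.1 ∧ n ≤ p.2.1 ∧ 0 ≤ p.2.2) := by
    apply filter_congr; intro p _; simp
  rw [h0, card_shift 0 n 0 d (by omega)]
  have : d - (0 + n + 0) = d - n := by omega
  rw [this]

lemma card_shift3 (n d : ℕ) (h : n ≤ d) :
    ((Tri d).filter fun p => n ≤ p.2.2).card = (Tri (d - n)).card := by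
  have h0 : ((Tri d).filter fun p => n ≤ p.2.2)
      = ((Tri d).filter fun p => 0 ≤ p.1 ∧ 0 ≤ p.2.1 ∧ n ≤ p.2.2) := by
    apply filter_congr; intro p _; simp
  rw [h0, card_shift 0 0 n d (by omega)]
  have : d - (0 + 0 + n) = d - n := by omega
  rw [this]

lemma two_card_Tri (d : ℕ) : 2 * (Tri d).card = (d+1)*(d+2) := by
  induction d with
  | zero => decide
  | succ n ih =>
    have hsplit := Finset.card_filter_add_card_filter_not
      (s := Tri (n+1)) (p := fun p => 1 ≤ p.1)
    have h1 : ((Tri (n+1)).filter fun p => 1 ≤ p.1).card = (Tri n).card := by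
      rw [card_shift1 1 (n+1) (by omega)]
      have : n + 1 - 1 = n := by omega
      rw [this]
    have h0 : ((Tri (n+1)).filter fun p => ¬ 1 ≤ p.1).card = n + 2 := by
      rw [show n + 2 = (Finset.range (n+2)).card by rw [card_range]]
      apply Finset.card_bij (fun p _ => p.2.1)
      · intro p hp
        simp only [mem_filter, mem_Tri] at hp
        simp only [mem_range]
        omega
      · intro p hp q hq hpq
        simp only [mem_filter, mem_Tri] at hp hq
        have : p.1 = q.1 := by omega
        have : p.2.2 = q.2.2 := by omega
        exact Prod.ext ‹p.1 = q.1› (Prod.ext hpq ‹p.2.2 = q.2.2›)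
      · intro b hb
        simp only [mem_range] at hb
        refine ⟨(0, b, n+1-b), ?_, rfl⟩
        simp only [mem_filter, mem_Tri]
        omega
    have hring : (n+1+1)*(n+1+2) = (n+1)*(n+2) + 2*(n+2) := by ring
    omega

/-- Decomposition of all triples of sum `d` into the in-box part and three
pairwise disjoint overflow parts. -/
lemma decomp (n1 n2 n3 d : ℕ) (h12 : d < n1+n2) (h13 : d < n1+n3) (h23 : d < n2+n3) :
    (Tri d).card
      = ((Tri d).filter fun p => p.1 < n1 ∧ p.2.1 < n2 ∧ p.2.2 < n3).card
        + ((Tri d).filter fun p => n1 ≤ p.1).card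
        + ((Tri d).filter fun p => n2 ≤ p.2.1).card
        + ((Tri d).filter fun p => n3 ≤ p.2.2).card := by
  have hsplit := Finset.card_filter_add_card_filter_not
    (s := Tri d) (p := fun p => p.1 < n1 ∧ p.2.1 < n2 ∧ p.2.2 < n3)
  have hunion : (Tri d).filter (fun p => ¬ (p.1 < n1 ∧ p.2.1 < n2 ∧ p.2.2 < n3))
      = ((Tri d).filter fun p => n1 ≤ p.1)
        ∪ ((Tri d).filter fun p => n2 ≤ p.2.1)
        ∪ ((Tri d).filter fun p => n3 ≤ p.2.2) := by
    ext p
    simp only [mem_filter, mem_union, mem_Tri]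
    constructor
    · rintro ⟨hp, hnot⟩
      by_cases h1 : n1 ≤ p.1
      · exact Or.inl (Or.inl ⟨hp, h1⟩)
      · by_cases h2 : n2 ≤ p.2.1
        · exact Or.inl (Or.inr ⟨hp, h2⟩)
        · exact Or.inr ⟨hp, by omega⟩
    · rintro ((⟨hp, h⟩ | ⟨hp, h⟩) | ⟨hp, h⟩) <;> exact ⟨hp, by omega⟩
  have hd12 : Disjoint ((Tri d).filter fun p => n1 ≤ p.1)
      ((Tri d).filter fun p => n2 ≤ p.2.1) := by
    rw [Finset.disjoint_left]
    intro p hp hq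
    simp only [mem_filter, mem_Tri] at hp hq
    omega
  have hd3 : Disjoint (((Tri d).filter fun p => n1 ≤ p.1)
      ∪ ((Tri d).filter fun p => n2 ≤ p.2.1))
      ((Tri d).filter fun p => n3 ≤ p.2.2) := by
    rw [Finset.disjoint_left]
    intro p hp hq
    simp only [mem_union, mem_filter, mem_Tri] at hp hq
    omega
  rw [hunion] at hsplit
  rw [Finset.card_union_of_disjoint hd3, Finset.card_union_of_disjoint hd12] at hsplit
  omega

/-- Relate `hilb` to counts inside `Tri d`. -/
lemma hilb_split (α β γ t d : ℕ) :
    hilb α β γ t d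
      + ((Tri d).filter fun p =>
          (p.1 < α+t ∧ p.2.1 < β+t ∧ p.2.2 < γ+t) ∧ (α ≤ p.1 ∧ β ≤ p.2.1 ∧ γ ≤ p.2.2)).card
      = ((Tri d).filter fun p => p.1 < α+t ∧ p.2.1 < β+t ∧ p.2.2 < γ+t).card := by
  have h0 : hilb α β γ t d
      = ((Tri d).filter fun p =>
          (p.1 < α+t ∧ p.2.1 < β+t ∧ p.2.2 < γ+t) ∧ ¬(α ≤ p.1 ∧ β ≤ p.2.1 ∧ γ ≤ p.2.2)).card := by
    unfold hilb
    congr 1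
    ext p
    simp only [mem_filter, mem_product, mem_range, mem_Tri]
    tauto
  rw [h0]
  have := Finset.card_filter_add_card_filter_not
    (s := (Tri d).filter fun p => p.1 < α+t ∧ p.2.1 < β+t ∧ p.2.2 < γ+t)
    (p := fun p => α ≤ p.1 ∧ β ≤ p.2.1 ∧ γ ≤ p.2.2)
  rw [Finset.filter_filter, Finset.filter_filter] at this
  omega

/-- For small `d`, the lower-bound constraints make the upper bounds automatic. -/
lemma B_drop_upper (α β γ t d : ℕ) (h : d < α+β+γ+t) :
    ((Tri d).filter fun p =>
        (p.1 < α+t ∧ p.2.1 < β+t ∧ p.2.2 < γ+t) ∧ (α ≤ p.1 ∧ β ≤ p.2.1 ∧ γ ≤ p.2.2))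
      = ((Tri d).filter fun p => α ≤ p.1 ∧ β ≤ p.2.1 ∧ γ ≤ p.2.2) := by
  apply filter_congr
  intro p hp
  rw [mem_Tri] at hp
  constructor
  · tauto
  · intro hL
    exact ⟨by omega, hL⟩

end HilbPeaksAux

/-- The Hilbert function takes equal values at the two peak degrees `s` and
`s+1`, where `s = (2/3)(α+β+γ) + t - 2` is encoded by
`3(s+2) = 2(α+β+γ) + 3t`. -/
theorem hilb_two_equal_peaks (α β γ t s : ℕ)
    (hα : 1 ≤ α) (hαβ : α ≤ β) (hβγ : β ≤ γ) (hγ : γ < 2 * (α + β))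
    (h3 : 3 ∣ (α + β + γ)) (ht : α + β + γ < 3 * t)
    (hs : 3 * (s + 2) = 2 * (α + β + γ) + 3 * t) :
    hilb α β γ t s = hilb α β γ t (s + 1) := by
  classical
  obtain ⟨k, hk⟩ := h3
  -- abbreviations
  have hk1 : 1 ≤ k := by omega
  -- the shifted amounts: u_i = s+1 - n_i ≥ 0, v = s+1 - σ ≥ 0
  obtain ⟨u1, hu1⟩ : ∃ u, (α + t) + u = s + 1 := ⟨s + 1 - (α+t), by omega⟩
  obtain ⟨u2, hu2⟩ : ∃ u, (β + t) + u = s + 1 := ⟨s + 1 - (β+t), by omega⟩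
  obtain ⟨u3, hu3⟩ : ∃ u, (γ + t) + u = s + 1 := ⟨s + 1 - (γ+t), by omega⟩
  obtain ⟨v, hv⟩ : ∃ v, (α + β + γ) + v = s + 1 := ⟨s + 1 - (α+β+γ), by omega⟩
  -- disjointness bounds
  have h12 : s + 1 < (α+t)+(β+t) := by omega
  have h13 : s + 1 < (α+t)+(γ+t) := by omega
  have h23 : s + 1 < (β+t)+(γ+t) := by omega
  -- doubled cardinalities of overflow pieces (no truncated subtraction)
  have twoV1 : ∀ n d u : ℕ, n + u = d + 1 →
      2 * ((HilbPeaksAux.Tri d).filter fun p => n ≤ p.1).card = u * (u+1) := by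
    intro n d u h
    rcases u with _ | u'
    · have : ((HilbPeaksAux.Tri d).filter fun p => n ≤ p.1) = ∅ := by
        apply Finset.filter_eq_empty_iff.mpr
        intro p hp
        rw [HilbPeaksAux.mem_Tri] at hp
        omega
      rw [this]
      simp
    · rw [HilbPeaksAux.card_shift1 n d (by omega), HilbPeaksAux.two_card_Tri]
      congr 1 <;> omega
  have twoV2 : ∀ n d u : ℕ, n + u = d + 1 →
      2 * ((HilbPeaksAux.Tri d).filter fun p => n ≤ p.2.1).card = u * (u+1) := by
    intro n d u h
    rcases u with _ | u'
    · have : ((HilbPeaksAux.Tri d).filter fun p => n ≤ p.2.1) = ∅ := by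
        apply Finset.filter_eq_empty_iff.mpr
        intro p hp
        rw [HilbPeaksAux.mem_Tri] at hp
        omega
      rw [this]
      simp
    · rw [HilbPeaksAux.card_shift2 n d (by omega), HilbPeaksAux.two_card_Tri]
      congr 1 <;> omega
  have twoV3 : ∀ n d u : ℕ, n + u = d + 1 →
      2 * ((HilbPeaksAux.Tri d).filter fun p => n ≤ p.2.2).card = u * (u+1) := by
    intro n d u h
    rcases u with _ | u'
    · have : ((HilbPeaksAux.Tri d).filter fun p => n ≤ p.2.2) = ∅ := by
        apply Finset.filter_eq_empty_iff.mpr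
        intro p hp
        rw [HilbPeaksAux.mem_Tri] at hp
        omega
      rw [this]
      simp
    · rw [HilbPeaksAux.card_shift3 n d (by omega), HilbPeaksAux.two_card_Tri]
      congr 1 <;> omega
  have twoB : ∀ d u : ℕ, (α + β + γ) + u = d + 1 →
      2 * ((HilbPeaksAux.Tri d).filter fun p => α ≤ p.1 ∧ β ≤ p.2.1 ∧ γ ≤ p.2.2).card
        = u * (u+1) := by
    intro d u h
    rcases u with _ | u'
    · have : ((HilbPeaksAux.Tri d).filter
          fun p => α ≤ p.1 ∧ β ≤ p.2.1 ∧ γ ≤ p.2.2) = ∅ := by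
        apply Finset.filter_eq_empty_iff.mpr
        intro p hp
        rw [HilbPeaksAux.mem_Tri] at hp
        omega
      rw [this]
      simp
    · rw [HilbPeaksAux.card_shift α β γ d (by omega), HilbPeaksAux.two_card_Tri]
      congr 1 <;> omega
  -- assemble equations at degree d ∈ {s, s+1}
  have master : ∀ d : ℕ, d ≤ s + 1 →
      2 * (HilbPeaksAux.Tri d).card
        = 2 * hilb α β γ t d
          + 2 * ((HilbPeaksAux.Tri d).filter fun p => α ≤ p.1 ∧ β ≤ p.2.1 ∧ γ ≤ p.2.2).card
          + 2 * ((HilbPeaksAux.Tri d).filter fun p => (α+t) ≤ p.1).card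
          + 2 * ((HilbPeaksAux.Tri d).filter fun p => (β+t) ≤ p.2.1).card
          + 2 * ((HilbPeaksAux.Tri d).filter fun p => (γ+t) ≤ p.2.2).card := by
    intro d hd
    have hdec := HilbPeaksAux.decomp (α+t) (β+t) (γ+t) d (by omega) (by omega) (by omega)
    have hhs := HilbPeaksAux.hilb_split α β γ t d
    have hB := HilbPeaksAux.B_drop_upper α β γ t d (by omega)
    rw [hB] at hhs
    omega
  -- degree s and s+1 equations
  have Es := master s (by omega)
  have Es1 := master (s+1) (le_refl _)
  rw [HilbPeaksAux.two_card_Tri, twoB s v (by omega), twoV1 (α+t) s u1 (by omega),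
    twoV2 (β+t) s u2 (by omega), twoV3 (γ+t) s u3 (by omega)] at Es
  rw [HilbPeaksAux.two_card_Tri, twoB (s+1) (v+1) (by omega),
    twoV1 (α+t) (s+1) (u1+1) (by omega), twoV2 (β+t) (s+1) (u2+1) (by omega),
    twoV3 (γ+t) (s+1) (u3+1) (by omega)] at Es1
  -- ring identities to linearize
  have r0 : (s+1+1)*(s+1+2) = (s+1)*(s+2) + 2*(s+2) := by ring
  have r1 : (u1+1)*(u1+1+1) = u1*(u1+1) + 2*(u1+1) := by ring
  have r2 : (u2+1)*(u2+1+1) = u2*(u2+1) + 2*(u2+1) := by ring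
  have r3 : (u3+1)*(u3+1+1) = u3*(u3+1) + 2*(u3+1) := by ring
  have rv : (v+1)*(v+1+1) = v*(v+1) + 2*(v+1) := by ring
  -- generalize remaining products and finish linearly
  generalize hP0 : (s+1)*(s+2) = P0 at Es r0
  generalize hQ0 : (s+1+1)*(s+1+2) = Q0 at Es1 r0
  generalize hP1 : u1*(u1+1) = P1 at Es r1
  generalize hQ1 : (u1+1)*(u1+1+1) = Q1 at Es1 r1
  generalize hP2 : u2*(u2+1) = P2 at Es r2
  generalize hQ2 : (u2+1)*(u2+1+1) = Q2 at Es1 r2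
  generalize hP3 : u3*(u3+1) = P3 at Es r3
  generalize hQ3 : (u3+1)*(u3+1+1) = Q3 at Es1 r3
  generalize hPv : v*(v+1) = Pv at Es rv
  generalize hQv : (v+1)*(v+1+1) = Qv at Es1 rv
  omega
end
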